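/- arXiv:2505.20991 — 3 statements merged into one kernel-verified Lean document; each statement's English description precedes it below -/
import Mathlib

section
/- Let (ν^k) be a sequence in a real inner product space and let τ ∈ (0,1) and M ≥ 0. If ‖(1 + K(1-τ)) ν^{K+1} + τ ∑_{k=1}^K ν^k‖ ≤ τ M for all K = 0, 1, 2, ..., then ‖∑_{k=1}^K ν^k‖ ≤ M for all K = 1, 2, .... -/
/-! Write `S_K = ∑_{k=1}^K ν^k` and `a_K = 1 + K(1-τ) ≥ 1`. The hypothesis bounds `a_K ν^{K+1} + τ S_K`,
and `a_K S_{K+1} = (a_K ν^{K+1} + τ S_K) + (a_K - τ) S_K` with `a_K - τ ≥ 0`, so `‖S_K‖ ≤ M` propagates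
by induction from `S_0 = 0`. -/

theorem norm_add_le_of_norm_smul_add_smul_le {E : Type*} [SeminormedAddCommGroup E]
    [NormedSpace ℝ E] {s v : E} {a τ M : ℝ} (ha : 0 < a) (hτa : τ ≤ a)
    (hstep : ‖a • v + τ • s‖ ≤ τ * M) (hs : ‖s‖ ≤ M) : ‖s + v‖ ≤ M := by
  have hdecomp : a • (s + v) = (a • v + τ • s) + (a - τ) • s := by
    rw [smul_add, sub_smul]; abel
  have hscaled : a * ‖s + v‖ ≤ a * M :=
    calc a * ‖s + v‖ = ‖a • (s + v)‖ := by rw [norm_smul, Real.norm_of_nonneg ha.le]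
      _ ≤ ‖a • v + τ • s‖ + ‖(a - τ) • s‖ := hdecomp ▸ norm_add_le _ _
      _ = ‖a • v + τ • s‖ + (a - τ) * ‖s‖ := by
          rw [norm_smul, Real.norm_of_nonneg (sub_nonneg.mpr hτa)]
      _ ≤ τ * M + (a - τ) * M := by gcongr
      _ = a * M := by ring
  exact le_of_mul_le_mul_left hscaled ha

theorem partial_sum_bound_general {E : Type*} [NormedAddCommGroup E] [InnerProductSpace ℝ E]
    (ν : ℕ → E) (τ M : ℝ) (hτ1 : τ < 1) (hM : 0 ≤ M)
    (h : ∀ K : ℕ,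
      ‖(1 + (K : ℝ) * (1 - τ)) • ν (K + 1) + τ • ∑ k ∈ Finset.Icc 1 K, ν k‖ ≤ τ * M) :
    ∀ K : ℕ, 1 ≤ K → ‖∑ k ∈ Finset.Icc 1 K, ν k‖ ≤ M := by
  suffices hall : ∀ K : ℕ, ‖∑ k ∈ Finset.Icc 1 K, ν k‖ ≤ M from fun K _ => hall K
  intro K
  induction K with
  | zero => simpa using hM
  | succ K ih =>
    have hK : (0 : ℝ) ≤ K * (1 - τ) := mul_nonneg K.cast_nonneg (by linarith)
    rw [Finset.sum_Icc_succ_top (Nat.le_add_left 1 K)]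
    exact norm_add_le_of_norm_smul_add_smul_le (by linarith) (by linarith) (h K) ih

theorem partial_sum_bound {E : Type*} [NormedAddCommGroup E] [InnerProductSpace ℝ E]
    (ν : ℕ → E) (τ M : ℝ) (hτ0 : 0 < τ) (hτ1 : τ < 1) (hM : 0 ≤ M)
    (h : ∀ K : ℕ,
      ‖(1 + (K : ℝ) * (1 - τ)) • ν (K + 1) + τ • ∑ k ∈ Finset.Icc 1 K, ν k‖ ≤ τ * M) :
    ∀ K : ℕ, 1 ≤ K → ‖∑ k ∈ Finset.Icc 1 K, ν k‖ ≤ M :=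
  partial_sum_bound_general ν τ M hτ1 hM h
end

section
/- Let τ ∈ (0,1), M ≥ 0, and suppose a sequence (ν^k) satisfies the hypotheses ‖(1+K(1-τ))ν^{K+1} + τ∑_{k=1}^K ν^k‖ ≤ τM for all K ≥ 0 with some constant C₃ = M·τ. Then for all K ≥ 1, ‖ν^{K+1}‖ ≤ 2C₃/(1 + K(1-τ)) where C₃ bounds the expression, i.e., if ‖(1/θ^K)ν^{K+1} + τ∑_{k=1}^K ν^k‖ ≤ C₃ with θ^K = 1/(1+K(1-τ)), then ‖ν^{K+1}‖ ≤ 2C₃/(1 + K(1-τ)). -/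
/-! With `b K = 1 + K(1 - τ) ≥ τ`, the scaled partial sum `τ S_{K+1}` is the convex combination
`(τ / b K) (b K ν_{K+1} + τ S_K) + (1 - τ / b K) (τ S_K)`, so by induction every `τ S_K` lies in the
ball of radius `C₃`. Then `b K ν_{K+1} = (b K ν_{K+1} + τ S_K) - τ S_K` has norm at most `2 C₃`. -/

open Finset

section PartialSums

variable {E : Type*} [NormedAddCommGroup E] [NormedSpace ℝ E]

theorem norm_smul_add_one_sub_smul_le {x y : E} {t C : ℝ} (ht₀ : 0 ≤ t) (ht₁ : t ≤ 1)
    (hx : ‖x‖ ≤ C) (hy : ‖y‖ ≤ C) : ‖t • x + (1 - t) • y‖ ≤ C := by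
  simpa only [mem_closedBall_zero_iff] using
    convex_closedBall (0 : E) C (mem_closedBall_zero_iff.2 hx) (mem_closedBall_zero_iff.2 hy)
      ht₀ (sub_nonneg.2 ht₁) (add_sub_cancel t 1)

theorem smul_sum_Icc_succ_eq_convex_combination (ν : ℕ → E) {τ b : ℝ} (hb : b ≠ 0) (K : ℕ) :
    τ • ∑ k ∈ Icc 1 (K + 1), ν k
      = (τ / b) • (b • ν (K + 1) + τ • ∑ k ∈ Icc 1 K, ν k)
        + (1 - τ / b) • (τ • ∑ k ∈ Icc 1 K, ν k) := by
  rw [sum_Icc_succ_top (by omega)]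
  match_scalars <;> field_simp; ring

theorem norm_smul_sum_Icc_le (ν : ℕ → E) (b : ℕ → ℝ) {τ C : ℝ} (hτ : 0 < τ)
    (hb : ∀ K, τ ≤ b K) (h : ∀ K, ‖b K • ν (K + 1) + τ • ∑ k ∈ Icc 1 K, ν k‖ ≤ C) (K : ℕ) :
    ‖τ • ∑ k ∈ Icc 1 K, ν k‖ ≤ C := by
  induction K with
  | zero => simpa using (norm_nonneg _).trans (h 0)
  | succ K ih =>
    have hbK : 0 < b K := hτ.trans_le (hb K)
    rw [smul_sum_Icc_succ_eq_convex_combination ν hbK.ne']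
    exact norm_smul_add_one_sub_smul_le (div_nonneg hτ.le hbK.le)
      ((div_le_one hbK).2 (hb K)) (h K) ih

end PartialSums

theorem term_decay_bound_general {E : Type*} [NormedAddCommGroup E] [InnerProductSpace ℝ E]
    (ν : ℕ → E) (τ C₃ : ℝ) (hτ0 : 0 < τ) (hτ1 : τ < 1)
    (h : ∀ K : ℕ,
      ‖(1 + (K : ℝ) * (1 - τ)) • ν (K + 1) + τ • ∑ k ∈ Finset.Icc 1 K, ν k‖ ≤ C₃) :
    ∀ K : ℕ, 1 ≤ K → ‖ν (K + 1)‖ ≤ 2 * C₃ / (1 + (K : ℝ) * (1 - τ)) := by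
  have hb : ∀ K : ℕ, τ ≤ 1 + (K : ℝ) * (1 - τ) := fun K => by
    nlinarith [mul_nonneg (Nat.cast_nonneg (α := ℝ) K) (sub_nonneg.2 hτ1.le)]
  have hS := norm_smul_sum_Icc_le ν (fun K : ℕ => 1 + (K : ℝ) * (1 - τ)) hτ0 hb h
  intro K _
  set S := τ • ∑ k ∈ Icc 1 K, ν k
  have hbK : 0 < 1 + (K : ℝ) * (1 - τ) := hτ0.trans_le (hb K)
  rw [le_div_iff₀ hbK, ← Real.norm_of_nonneg hbK.le, mul_comm, ← norm_smul]
  calc ‖(1 + (K : ℝ) * (1 - τ)) • ν (K + 1)‖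
      = ‖((1 + (K : ℝ) * (1 - τ)) • ν (K + 1) + S) - S‖ := by rw [add_sub_cancel_right]
    _ ≤ C₃ + C₃ := (norm_sub_le _ _).trans (add_le_add (h K) (hS K))
    _ = 2 * C₃ := by ring

theorem term_decay_bound {E : Type*} [NormedAddCommGroup E] [InnerProductSpace ℝ E]
    (ν : ℕ → E) (τ C₃ : ℝ) (hτ0 : 0 < τ) (hτ1 : τ < 1) (hC : 0 ≤ C₃)
    (h : ∀ K : ℕ,
      ‖(1 + (K : ℝ) * (1 - τ)) • ν (K + 1) + τ • ∑ k ∈ Finset.Icc 1 K, ν k‖ ≤ C₃) :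
    ∀ K : ℕ, 1 ≤ K → ‖ν (K + 1)‖ ≤ 2 * C₃ / (1 + (K : ℝ) * (1 - τ)) :=
  term_decay_bound_general ν τ C₃ hτ0 hτ1 h
end

section
/- Let 0 < γ₁ ≤ γ₂ and define h: ℝ → ℝ by h(x) = 0 for |x| ≤ γ₁, h(x) = (x² - 2γ₁|x| + γ₁²)/(2(γ₂ - γ₁)) for γ₁ < |x| ≤ γ₂, and h(x) = |x| - (γ₁ + γ₂)/2 for |x| > γ₂ (assuming γ₁ < γ₂). Then h is convex and continuously differentiable on ℝ. -/
/-!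
For `0 ≤ γ₁ < γ₂` the SCAD function is the even part `H x + H (-x)` of
`H x = (x - γ₁)₊² - (x - γ₂)₊²`, scaled by `1 / (2 (γ₂ - γ₁))`. Since `t ↦ t₊²` is `C¹` with
derivative `2 t₊`, `H` is `C¹` with derivative twice the clamped ramp `(x - γ₁)₊ - (x - γ₂)₊`,
which is monotone. Hence the derivative of the SCAD function is continuous and monotone, and
the function is convex.
-/

open Set Filter Topology Asymptotics

theorem Monotone.convexOn_univ_of_hasDerivAt {f f' : ℝ → ℝ} (hf' : Monotone f')
    (hf : ∀ x, HasDerivAt f (f' x) x) : ConvexOn ℝ univ f := by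
  have hderiv : deriv f = f' := funext fun x => (hf x).deriv
  exact Monotone.convexOn_univ_of_deriv (fun x => (hf x).differentiableAt) (hderiv ▸ hf')

theorem hasDerivAt_max_zero_sq (x : ℝ) :
    HasDerivAt (fun t : ℝ => max t 0 ^ 2) (2 * max x 0) x := by
  rcases lt_trichotomy x 0 with hx | rfl | hx
  · have hloc : (fun t : ℝ => max t 0 ^ 2) =ᶠ[𝓝 x] fun _ => 0 := by
      filter_upwards [eventually_lt_nhds hx] with t ht
      simp [max_eq_right ht.le]
    simpa [max_eq_right hx.le] using (hasDerivAt_const x (0 : ℝ)).congr_of_eventuallyEq hloc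
  · have hbound : (fun t : ℝ => max t 0 ^ 2) =O[𝓝 0] fun t => t ^ 2 :=
      IsBigO.of_bound 1 <| Eventually.of_forall fun t => by
        rcases le_total t 0 with ht | ht <;> simp [ht, sq_nonneg]
    simpa [hasDerivAt_iff_isLittleO] using hbound.trans_isLittleO (isLittleO_pow_id one_lt_two)
  · have hloc : (fun t : ℝ => max t 0 ^ 2) =ᶠ[𝓝 x] fun t => t ^ 2 := by
      filter_upwards [eventually_gt_nhds hx] with t ht
      simp [max_eq_left ht.le]
    simpa [max_eq_left hx.le, mul_comm] using (hasDerivAt_pow 2 x).congr_of_eventuallyEq hloc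

section Hinge

variable (a b : ℝ)

noncomputable def hingeDiff (x : ℝ) : ℝ := max (x - a) 0 - max (x - b) 0

noncomputable def sqHingeDiff (x : ℝ) : ℝ := max (x - a) 0 ^ 2 - max (x - b) 0 ^ 2

theorem continuous_hingeDiff : Continuous (hingeDiff a b) := by
  unfold hingeDiff
  fun_prop

variable {a b}

theorem monotone_hingeDiff (hab : a ≤ b) : Monotone (hingeDiff a b) := by
  intro x y hxy
  simp only [hingeDiff, max_def]
  split_ifs <;> linarith

variable (a b)

theorem hasDerivAt_sqHingeDiff (x : ℝ) :
    HasDerivAt (sqHingeDiff a b) (2 * hingeDiff a b x) x := by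
  have hb := (hasDerivAt_max_zero_sq (x - b)).comp_sub_const x b
  rw [hingeDiff, mul_sub]
  exact ((hasDerivAt_max_zero_sq (x - a)).comp_sub_const x a).sub hb

theorem hasDerivAt_sqHingeDiff_add_comp_neg (x : ℝ) :
    HasDerivAt (fun x => sqHingeDiff a b x + sqHingeDiff a b (-x))
      (2 * (hingeDiff a b x - hingeDiff a b (-x))) x := by
  have hneg := (hasDerivAt_sqHingeDiff a b (-x)).scomp x (hasDerivAt_neg x)
  exact ((hasDerivAt_sqHingeDiff a b x).add hneg).congr_deriv (by simp only [smul_eq_mul, neg_mul, one_mul]; ring)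

variable {a b}

theorem scad_eq_sqHingeDiff (ha : 0 ≤ a) (hab : a < b) (x : ℝ) :
    (if |x| ≤ a then 0
      else if |x| ≤ b then (x ^ 2 - 2 * a * |x| + a ^ 2) / (2 * (b - a))
      else |x| - (a + b) / 2) = (sqHingeDiff a b x + sqHingeDiff a b (-x)) / (2 * (b - a)) := by
  have hba : b - a ≠ 0 := by linarith
  rcases abs_cases x with ⟨hx, hx0⟩ | ⟨hx, hx0⟩ <;> rw [hx] <;>
    simp only [sqHingeDiff, max_def] <;> split_ifs <;>
    first
      | linarith
      | (field_simp; ring)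

end Hinge

theorem scad_like_convex_C1 (γ₁ γ₂ : ℝ) (h1 : 0 < γ₁) (h12 : γ₁ < γ₂)
    (h : ℝ → ℝ)
    (hh : ∀ x, h x = if |x| ≤ γ₁ then 0
      else if |x| ≤ γ₂ then (x ^ 2 - 2 * γ₁ * |x| + γ₁ ^ 2) / (2 * (γ₂ - γ₁))
      else |x| - (γ₁ + γ₂) / 2) :
    ConvexOn ℝ Set.univ h ∧ ∃ h' : ℝ → ℝ, Continuous h' ∧ ∀ x, HasDerivAt h (h' x) x := by
  obtain rfl : h = fun x => (sqHingeDiff γ₁ γ₂ x + sqHingeDiff γ₁ γ₂ (-x)) / (2 * (γ₂ - γ₁)) :=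
    funext fun x => (hh x).trans (scad_eq_sqHingeDiff h1.le h12 x)
  set R := hingeDiff γ₁ γ₂
  set h' := fun x => 2 * (R x - R (-x)) / (2 * (γ₂ - γ₁))
  have hderiv : ∀ x, HasDerivAt _ (h' x) x := fun x =>
    (hasDerivAt_sqHingeDiff_add_comp_neg γ₁ γ₂ x).div_const _
  have hR : Monotone R := monotone_hingeDiff h12.le
  have hodd : Monotone fun x => R x - R (-x) := fun x y hxy =>
    sub_le_sub (hR hxy) (hR (neg_le_neg hxy))
  have hmono : Monotone h' := (hodd.const_mul zero_le_two).div_const (by linarith)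
  have hcont : Continuous h' := by
    have := continuous_hingeDiff γ₁ γ₂
    fun_prop
  exact ⟨hmono.convexOn_univ_of_hasDerivAt hderiv, h', hcont, hderiv⟩
end
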